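/- arXiv:2201.03563 — 5 statements merged into one kernel-verified Lean document; each statement's English description precedes it below -/
import Mathlib

section
/- Let G be a connected graph on n vertices without isolated vertices and with domination number γ(G) = 1. Then for every permutation π of V(G) and every p ∈ ((n+1)/(2n), 1], the p-domination number of the prism satisfies γ_p(πG) = 2. -/
open SimpleGraph

/-- Closed neighborhood of a set of vertices. -/
def closedNbhd {V : Type*} (G : SimpleGraph V) (S : Set V) : Set V :=
  {v | v ∈ S ∨ ∃ u ∈ S, G.Adj u v}

/-- `S` is a `p`-dominating set of `G`. -/
def IsPDomSet {V : Type*} [Fintype V] (G : SimpleGraph V) (p : ℝ) (S : Set V) : Prop :=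
  p ≤ (closedNbhd G S).ncard / (Fintype.card V : ℝ)

/-- The `p`-domination number of `G`. -/
noncomputable def pDomNum {V : Type*} [Fintype V] (G : SimpleGraph V) (p : ℝ) : ℕ :=
  sInf {k | ∃ S : Set V, IsPDomSet G p S ∧ S.ncard = k}

/-- `S` is a dominating set of `G`. -/
def IsDomSet {V : Type*} (G : SimpleGraph V) (S : Set V) : Prop :=
  ∀ v, v ∈ closedNbhd G S

/-- The domination number of `G`. -/
noncomputable def domNum {V : Type*} (G : SimpleGraph V) : ℕ :=
  sInf {k | ∃ S : Set V, IsDomSet G S ∧ S.ncard = k}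

/-- The prism of `G` with respect to a permutation `π`. -/
def prism {V : Type*} (G : SimpleGraph V) (π : Equiv.Perm V) : SimpleGraph (V ⊕ V) where
  Adj x y := match x, y with
    | .inl a, .inl b => G.Adj a b
    | .inr a, .inr b => G.Adj a b
    | .inl a, .inr b => π a = b
    | .inr a, .inl b => π b = a
  symm := ⟨by rintro (a|a) (b|b) h <;> simp_all [SimpleGraph.adj_comm]⟩
  loopless := ⟨by rintro (a|a) h <;> simp_all⟩

/-!
A vertex `v` dominating `G` gives the dominating pair `{(v,1), (v,2)}` of the prism. Conversely a
single vertex of the prism dominates at most its own copy of `G` and its one neighbour in the other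
copy, i.e. at most `n + 1` of the `2n` vertices, which falls short of a `p`-fraction once
`p > (n + 1) / (2n)`.
-/

section

variable {V : Type*}

theorem closedNbhd_empty (G : SimpleGraph V) : closedNbhd G ∅ = ∅ := by
  simp [closedNbhd]

theorem exists_isDomSet_singleton_of_domNum_eq_one {G : SimpleGraph V} (hγ : domNum G = 1) :
    ∃ v, IsDomSet G {v} := by
  have hmem : 1 ∈ {k | ∃ S : Set V, IsDomSet G S ∧ S.ncard = k} := by
    rw [← hγ]
    refine Nat.sInf_mem ?_
    by_contra hempty
    rw [Set.not_nonempty_iff_eq_empty] at hempty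
    simp [domNum, hempty] at hγ
  obtain ⟨S, hS, hcard⟩ := hmem
  obtain ⟨v, rfl⟩ := Set.ncard_eq_one.mp hcard
  exact ⟨v, hS⟩

theorem IsDomSet.prism {G : SimpleGraph V} {S : Set V} (hS : IsDomSet G S) (π : Equiv.Perm V) :
    IsDomSet (prism G π) (Sum.inl '' S ∪ Sum.inr '' S) := by
  rintro (a | a) <;> rcases hS a with ha | ⟨u, hu, hadj⟩
  · exact Or.inl (Or.inl ⟨a, ha, rfl⟩)
  · exact Or.inr ⟨Sum.inl u, Or.inl ⟨u, hu, rfl⟩, hadj⟩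
  · exact Or.inl (Or.inr ⟨a, ha, rfl⟩)
  · exact Or.inr ⟨Sum.inr u, Or.inr ⟨u, hu, rfl⟩, hadj⟩

theorem closedNbhd_prism_inl_subset (G : SimpleGraph V) (π : Equiv.Perm V) (a : V) :
    closedNbhd (prism G π) {Sum.inl a} ⊆ insert (Sum.inr (π a)) (Set.range Sum.inl) := by
  rintro (b | b) (hb | ⟨u, rfl, hadj⟩)
  · exact Or.inr ⟨b, rfl⟩
  · exact Or.inr ⟨b, rfl⟩
  · simp at hb
  · exact Or.inl (congrArg Sum.inr (Eq.symm hadj))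

theorem closedNbhd_prism_inr_subset (G : SimpleGraph V) (π : Equiv.Perm V) (a : V) :
    closedNbhd (prism G π) {Sum.inr a} ⊆ insert (Sum.inl (π.symm a)) (Set.range Sum.inr) := by
  rintro (b | b) (hb | ⟨u, rfl, hadj⟩)
  · simp at hb
  · exact Or.inl (congrArg Sum.inl (π.eq_symm_apply.mpr hadj))
  · exact Or.inr ⟨b, rfl⟩
  · exact Or.inr ⟨b, rfl⟩

theorem ncard_insert_range_le [Fintype V] {W : Type*} {f : V → W} (hf : f.Injective) (w : W) :
    (insert w (Set.range f)).ncard ≤ Fintype.card V + 1 := by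
  simpa [Set.ncard_range_of_injective hf] using Set.ncard_insert_le w (Set.range f)

theorem ncard_closedNbhd_prism_le [Fintype V] (G : SimpleGraph V) (π : Equiv.Perm V)
    {T : Set (V ⊕ V)} (hT : T.ncard ≤ 1) :
    (closedNbhd (prism G π) T).ncard ≤ Fintype.card V + 1 := by
  rcases (Set.ncard_le_one_iff_eq T.toFinite).mp hT with rfl | ⟨x | x, rfl⟩
  · simp [closedNbhd_empty]
  · exact (Set.ncard_le_ncard (closedNbhd_prism_inl_subset G π x)).trans
      (ncard_insert_range_le Sum.inl_injective _)
  · exact (Set.ncard_le_ncard (closedNbhd_prism_inr_subset G π x)).trans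
      (ncard_insert_range_le Sum.inr_injective _)

theorem two_le_ncard_of_isPDomSet_prism [Fintype V] {G : SimpleGraph V} {π : Equiv.Perm V}
    {p : ℝ} (hp : ((Fintype.card V : ℝ) + 1) / (2 * Fintype.card V) < p) {T : Set (V ⊕ V)}
    (hT : IsPDomSet (prism G π) p T) : 2 ≤ T.ncard := by
  by_contra! hsmall
  have hbound : ((closedNbhd (prism G π) T).ncard : ℝ) ≤ Fintype.card V + 1 := by
    exact_mod_cast ncard_closedNbhd_prism_le G π (Nat.le_of_lt_succ hsmall)
  have hcard : (Fintype.card (V ⊕ V) : ℝ) = 2 * Fintype.card V := by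
    rw [Fintype.card_sum]; push_cast; ring
  rw [IsPDomSet, hcard] at hT
  have : p ≤ ((Fintype.card V : ℝ) + 1) / (2 * Fintype.card V) :=
    hT.trans (div_le_div_of_nonneg_right hbound (by positivity))
  linarith

theorem isPDomSet_of_isDomSet [Fintype V] [Nonempty V] {G : SimpleGraph V} {S : Set V} {p : ℝ}
    (hp : p ≤ 1) (hS : IsDomSet G S) : IsPDomSet G p S := by
  have hcover : closedNbhd G S = Set.univ := Set.eq_univ_of_forall hS
  rwa [IsPDomSet, hcover, Set.ncard_univ, Nat.card_eq_fintype_card,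
    div_self (by exact_mod_cast Fintype.card_ne_zero)]

theorem pDomNum_eq_of_isPDomSet [Fintype V] {G : SimpleGraph V} {p : ℝ} {S : Set V} {k : ℕ}
    (hS : IsPDomSet G p S) (hSk : S.ncard = k) (hmin : ∀ T, IsPDomSet G p T → k ≤ T.ncard) :
    pDomNum G p = k :=
  le_antisymm (Nat.sInf_le ⟨S, hS, hSk⟩) (le_csInf ⟨_, S, hS, hSk⟩ (by
    rintro _ ⟨T, hT, rfl⟩
    exact hmin T hT))

end

theorem stmt1_general {V : Type*} [Fintype V] (G : SimpleGraph V) (n : ℕ)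
    (hn : Fintype.card V = n)
    (hγ : domNum G = 1)
    (π : Equiv.Perm V) (p : ℝ)
    (hp0 : ((n : ℝ) + 1) / (2 * n) < p) (hp1 : p ≤ 1) :
    pDomNum (prism G π) p = 2 := by
  subst hn
  obtain ⟨v, hv⟩ := exists_isDomSet_singleton_of_domNum_eq_one hγ
  have hpair : IsDomSet (prism G π) {Sum.inl v, Sum.inr v} := by
    simpa only [Set.image_singleton, Set.singleton_union] using hv.prism π
  have : Nonempty (V ⊕ V) := ⟨Sum.inl v⟩
  exact pDomNum_eq_of_isPDomSet (isPDomSet_of_isDomSet hp1 hpair) (Set.ncard_pair Sum.inl_ne_inr)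
    fun T hT => two_le_ncard_of_isPDomSet_prism hp0 hT

theorem stmt1 {V : Type*} [Fintype V] (G : SimpleGraph V) (n : ℕ)
    (hn : Fintype.card V = n)
    (hconn : G.Connected)
    (hiso : ∀ v : V, ∃ u : V, G.Adj u v)
    (hγ : domNum G = 1)
    (π : Equiv.Perm V) (p : ℝ)
    (hp0 : ((n : ℝ) + 1) / (2 * n) < p) (hp1 : p ≤ 1) :
    pDomNum (prism G π) p = 2 :=
  stmt1_general G n hn hγ π p hp0 hp1
end

section
/- Let G be the path P_n on n ≥ 2 vertices. Then for every permutation π of V(G), γ_{(n+γ(G))/(2n)}(πG) = γ(G); that is, the p-domination number of the prism with p = (n+γ(G))/(2n) equals the domination number of G. -/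
open SimpleGraph

/-! If `D` is a minimum dominating set of `G` and `n = |V(G)|`, then `Sum.inl '' D` dominates
the whole first copy together with the `γ(G)` vertices `π '' D` of the second, so `γ(G)`
vertices reach the required `n + γ(G)` of the `2n` vertices. Conversely, when `G` has maximum
degree at most 2 every vertex of the prism closes at most 4 vertices, so a set `S` reaching
`n + γ(G)` vertices has `4|S| ≥ n + γ(G)`; together with `3γ(P_n) ≤ n + 2` this forces
`|S| ≥ γ(G)`. -/

section

variable {V : Type*} (G : SimpleGraph V)

lemma closedNbhd_eq_biUnion (S : Set V) :
    closedNbhd G S = ⋃ v ∈ S, insert v (G.neighborSet v) := by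
  ext w
  simp only [closedNbhd, Set.mem_ofPred_eq, Set.mem_iUnion, Set.mem_insert_iff,
    mem_neighborSet, exists_prop]
  constructor
  · rintro (hw | ⟨u, hu, huw⟩)
    · exact ⟨w, hw, Or.inl rfl⟩
    · exact ⟨u, hu, Or.inr huw⟩
  · rintro ⟨u, hu, rfl | huw⟩
    exacts [Or.inl hu, Or.inr ⟨u, hu, huw⟩]

lemma ncard_closedNbhd_le [Finite V] {d : ℕ} (hdeg : ∀ v, (G.neighborSet v).ncard ≤ d)
    (S : Set V) : (closedNbhd G S).ncard ≤ (d + 1) * S.ncard := by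
  have hS := S.toFinite
  calc (closedNbhd G S).ncard
      = (⋃ v ∈ hS.toFinset, insert v (G.neighborSet v)).ncard := by
        simp [closedNbhd_eq_biUnion]
    _ ≤ ∑ v ∈ hS.toFinset, (insert v (G.neighborSet v)).ncard :=
        Finset.set_ncard_biUnion_le _ _
    _ ≤ ∑ _v ∈ hS.toFinset, (d + 1) :=
        Finset.sum_le_sum fun v _ => (Set.ncard_insert_le _ _).trans (by simpa using hdeg v)
    _ = (d + 1) * S.ncard := by
        rw [Finset.sum_const, smul_eq_mul, mul_comm, Set.ncard_eq_toFinset_card S hS]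

lemma isPDomSet_div_card_iff [Fintype V] [Nonempty V] (k : ℕ) (S : Set V) :
    IsPDomSet G (k / Fintype.card V) S ↔ k ≤ (closedNbhd G S).ncard := by
  rw [IsPDomSet, div_le_div_iff_of_pos_right (by exact_mod_cast Fintype.card_pos), Nat.cast_le]

lemma pDomNum_le [Fintype V] {p : ℝ} {S : Set V} (hS : IsPDomSet G p S) :
    pDomNum G p ≤ S.ncard :=
  Nat.sInf_le ⟨S, hS, rfl⟩

lemma le_pDomNum [Fintype V] {p : ℝ} {k : ℕ} (hex : ∃ S, IsPDomSet G p S)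
    (hk : ∀ S, IsPDomSet G p S → k ≤ S.ncard) : k ≤ pDomNum G p := by
  obtain ⟨S, hS⟩ := hex
  exact le_csInf ⟨_, S, hS, rfl⟩ (by rintro _ ⟨T, hT, rfl⟩; exact hk T hT)

lemma domNum_le {S : Set V} (hS : IsDomSet G S) : domNum G ≤ S.ncard :=
  Nat.sInf_le ⟨S, hS, rfl⟩

lemma exists_isDomSet_ncard_eq_domNum : ∃ S, IsDomSet G S ∧ S.ncard = domNum G :=
  Nat.sInf_mem (s := {k | ∃ S, IsDomSet G S ∧ S.ncard = k})
    ⟨_, Set.univ, fun _ => Or.inl trivial, rfl⟩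

end

section Prism

variable {V : Type*} (G : SimpleGraph V) (π : Equiv.Perm V)

lemma neighborSet_prism_inl (a : V) :
    (prism G π).neighborSet (.inl a) = insert (.inr (π a)) (Sum.inl '' G.neighborSet a) := by
  ext (b | b) <;> simp [prism, eq_comm]

lemma neighborSet_prism_inr (a : V) :
    (prism G π).neighborSet (.inr a) = insert (.inl (π.symm a)) (Sum.inr '' G.neighborSet a) := by
  ext (b | b) <;> simp [prism, Equiv.eq_symm_apply]

lemma ncard_neighborSet_prism_le {d : ℕ} (hdeg : ∀ v, (G.neighborSet v).ncard ≤ d)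
    (x : V ⊕ V) : ((prism G π).neighborSet x).ncard ≤ d + 1 := by
  rcases x with a | a
  · rw [neighborSet_prism_inl]
    refine (Set.ncard_insert_le _ _).trans ?_
    rw [Set.ncard_image_of_injective _ Sum.inl_injective]
    exact Nat.add_le_add_right (hdeg a) 1
  · rw [neighborSet_prism_inr]
    refine (Set.ncard_insert_le _ _).trans ?_
    rw [Set.ncard_image_of_injective _ Sum.inr_injective]
    exact Nat.add_le_add_right (hdeg a) 1

lemma card_add_ncard_le_ncard_closedNbhd_prism [Finite V] {D : Set V} (hD : IsDomSet G D) :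
    Nat.card V + D.ncard ≤ (closedNbhd (prism G π) (Sum.inl '' D)).ncard := by
  have hsub : Set.range Sum.inl ∪ Sum.inr '' (π '' D)
      ⊆ closedNbhd (prism G π) (Sum.inl '' D) := by
    rintro x (⟨a, rfl⟩ | ⟨_, ⟨d, hd, rfl⟩, rfl⟩)
    · rcases hD a with h | ⟨u, hu, hadj⟩
      · exact Or.inl ⟨a, h, rfl⟩
      · exact Or.inr ⟨.inl u, ⟨u, hu, rfl⟩, hadj⟩
    · exact Or.inr ⟨.inl d, ⟨d, hd, rfl⟩, rfl⟩
  have hdisj : Disjoint (Set.range (Sum.inl : V → V ⊕ V)) (Sum.inr '' (π '' D)) :=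
    Set.disjoint_left.2 (by rintro _ ⟨a, rfl⟩ ⟨b, -, h⟩; exact Sum.inr_ne_inl h)
  calc Nat.card V + D.ncard
      = (Set.range (Sum.inl : V → V ⊕ V) ∪ Sum.inr '' (π '' D)).ncard := by
        rw [Set.ncard_union_eq hdisj, Set.ncard_range_of_injective Sum.inl_injective,
          Set.ncard_image_of_injective _ Sum.inr_injective,
          Set.ncard_image_of_injective _ π.injective]
    _ ≤ _ := Set.ncard_le_ncard hsub

end Prism

lemma ncard_neighborSet_pathGraph_le {n : ℕ} (v : Fin n) :
    ((pathGraph n).neighborSet v).ncard ≤ 2 := by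
  calc ((pathGraph n).neighborSet v).ncard
      ≤ ({v.val + 1, v.val - 1} : Set ℕ).ncard := by
        refine Set.ncard_le_ncard_of_injOn Fin.val (fun w hw => ?_) Fin.val_injective.injOn
        rw [mem_neighborSet, pathGraph_adj] at hw
        simp only [Set.mem_insert_iff, Set.mem_singleton_iff]
        omega
    _ ≤ 2 := (Set.ncard_insert_le _ _).trans (by simp)

lemma three_mul_domNum_pathGraph_le (n : ℕ) : 3 * domNum (pathGraph n) ≤ n + 2 := by
  let center (j : Fin ((n + 2) / 3)) : Fin n := ⟨min (3 * j.val + 1) (n - 1), by omega⟩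
  have hdom : IsDomSet (pathGraph n) (Set.range center) := by
    intro v
    have hc : (center ⟨v / 3, by omega⟩).val = min (3 * (v.val / 3) + 1) (n - 1) := rfl
    have hv := v.isLt
    by_cases heq : center ⟨v / 3, by omega⟩ = v
    · exact Or.inl ⟨_, heq⟩
    · refine Or.inr ⟨_, ⟨⟨v / 3, by omega⟩, rfl⟩, ?_⟩
      rw [pathGraph_adj]
      have := Fin.val_ne_of_ne heq
      omega
  have hcard : (Set.range center).ncard ≤ (n + 2) / 3 := by
    simpa [Set.ncard_univ] using Set.ncard_image_le (f := center) (s := Set.univ)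
  have := (domNum_le _ hdom).trans hcard
  omega

theorem pDomNum_prism_eq_domNum {V : Type*} [Fintype V] [Nonempty V] (G : SimpleGraph V)
    (π : Equiv.Perm V) (hdeg : ∀ v, (G.neighborSet v).ncard ≤ 2)
    (hγ : 3 * domNum G ≤ Fintype.card V + 2) :
    pDomNum (prism G π) (((Fintype.card V : ℝ) + domNum G) / (2 * Fintype.card V)) =
      domNum G := by
  have hp : ((Fintype.card V : ℝ) + domNum G) / (2 * Fintype.card V) =
      ((Fintype.card V + domNum G : ℕ) : ℝ) / Fintype.card (V ⊕ V) := by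
    push_cast [Fintype.card_sum]; ring
  have hpdom := isPDomSet_div_card_iff (prism G π) (Fintype.card V + domNum G)
  rw [hp]
  obtain ⟨D, hD, hDcard⟩ := exists_isDomSet_ncard_eq_domNum G
  have hD' : IsPDomSet (prism G π) _ (Sum.inl '' D) := (hpdom _).2 <| by
    simpa [Nat.card_eq_fintype_card, hDcard] using
      card_add_ncard_le_ncard_closedNbhd_prism G π hD
  refine le_antisymm ?_ (le_pDomNum _ ⟨_, hD'⟩ fun S hS => ?_)
  · simpa [Set.ncard_image_of_injective _ Sum.inl_injective, hDcard] using pDomNum_le _ hD'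
  · have hle := ncard_closedNbhd_le _ (ncard_neighborSet_prism_le G π hdeg) S
    have hge := (hpdom S).1 hS
    omega

theorem stmt5 (n : ℕ) (hn : 2 ≤ n) (π : Equiv.Perm (Fin n)) :
    pDomNum (prism (SimpleGraph.pathGraph n) π)
        (((n : ℝ) + domNum (SimpleGraph.pathGraph n)) / (2 * n))
      = domNum (SimpleGraph.pathGraph n) := by
  have : Nonempty (Fin n) := ⟨⟨0, by omega⟩⟩
  simpa using pDomNum_prism_eq_domNum (pathGraph n) π ncard_neighborSet_pathGraph_le
    (by simpa using three_mul_domNum_pathGraph_le n)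
end

section
/- Let G be the cycle C_n on n ≥ 3 vertices. Then for every permutation π of V(G), γ_{(n+γ(G))/(2n)}(πG) = γ(G); that is, the p-domination number of the prism with p = (n+γ(G))/(2n) equals the domination number of G. -/
open SimpleGraph

/-!
A vertex of the prism has at most `Δ + 1` neighbours when `G` has maximum degree `Δ`, so a
`p`-dominating set `S` with `p = (n + γ) / (2n)` satisfies `n + γ ≤ |N[S]| ≤ (Δ + 2)|S|`. For the
cycle, `Δ = 2` and `3γ ≤ n + 2`, which forces `|S| ≥ γ`. Conversely, a minimum dominating set
of the first copy of `G` dominates that copy and the `γ` vertices of the second copy matched to it.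
-/

namespace SimpleGraph

variable {V : Type*}

theorem closedNbhd_eq_biUnion (G : SimpleGraph V) (S : Set V) :
    closedNbhd G S = ⋃ u ∈ S, insert u (G.neighborSet u) := by
  ext v
  simp only [closedNbhd, Set.mem_ofPred_eq, Set.mem_iUnion, Set.mem_insert_iff, mem_neighborSet,
    exists_prop]
  constructor
  · rintro (hv | ⟨u, hu, huv⟩)
    · exact ⟨v, hv, Or.inl rfl⟩
    · exact ⟨u, hu, Or.inr huv⟩
  · rintro ⟨u, hu, rfl | huv⟩
    · exact Or.inl hu
    · exact Or.inr ⟨u, hu, huv⟩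

theorem ncard_closedNbhd_le [Finite V] {G : SimpleGraph V} {Δ : ℕ}
    (hΔ : ∀ v, (G.neighborSet v).ncard ≤ Δ) (S : Set V) :
    (closedNbhd G S).ncard ≤ (Δ + 1) * S.ncard := by
  obtain ⟨t, rfl⟩ := S.toFinite.exists_finset_coe
  rw [closedNbhd_eq_biUnion, Set.ncard_coe_finset]
  calc (⋃ u ∈ t, insert u (G.neighborSet u)).ncard
      ≤ ∑ u ∈ t, (insert u (G.neighborSet u)).ncard := by
        simpa using t.set_ncard_biUnion_le fun u => insert u (G.neighborSet u)
    _ ≤ ∑ _u ∈ t, (Δ + 1) :=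
        Finset.sum_le_sum fun u _ => (Set.ncard_insert_le _ _).trans (by simpa using hΔ u)
    _ = (Δ + 1) * t.card := by rw [Finset.sum_const, smul_eq_mul, mul_comm]

theorem neighborSet_prism_inl (G : SimpleGraph V) (π : Equiv.Perm V) (a : V) :
    (prism G π).neighborSet (.inl a) = insert (.inr (π a)) (.inl '' G.neighborSet a) := by
  ext (b | b) <;> simp [prism, eq_comm]

theorem neighborSet_prism_inr (G : SimpleGraph V) (π : Equiv.Perm V) (a : V) :
    (prism G π).neighborSet (.inr a) = insert (.inl (π.symm a)) (.inr '' G.neighborSet a) := by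
  ext (b | b) <;> simp [prism, Equiv.eq_symm_apply]

theorem ncard_neighborSet_prism_le [Finite V] {G : SimpleGraph V} {Δ : ℕ}
    (hΔ : ∀ v, (G.neighborSet v).ncard ≤ Δ) (π : Equiv.Perm V) (x : V ⊕ V) :
    ((prism G π).neighborSet x).ncard ≤ Δ + 1 := by
  rcases x with a | a
  · rw [neighborSet_prism_inl]
    exact (Set.ncard_insert_le _ _).trans (by grw [Set.ncard_image_le, hΔ a])
  · rw [neighborSet_prism_inr]
    exact (Set.ncard_insert_le _ _).trans (by grw [Set.ncard_image_le, hΔ a])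

theorem domNum_le {G : SimpleGraph V} {D : Set V} (hD : IsDomSet G D) : domNum G ≤ D.ncard :=
  Nat.sInf_le ⟨D, hD, rfl⟩

theorem exists_isDomSet_ncard_eq_domNum (G : SimpleGraph V) :
    ∃ D : Set V, IsDomSet G D ∧ D.ncard = domNum G :=
  Nat.sInf_mem (s := {k | ∃ D : Set V, IsDomSet G D ∧ D.ncard = k})
    ⟨_, Set.univ, fun v => Or.inl (Set.mem_univ v), rfl⟩

theorem isPDomSet_iff_le_ncard [Fintype V] [Nonempty V] {G : SimpleGraph V} {m : ℝ}
    {S : Set V} :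
    IsPDomSet G (m / Fintype.card V) S ↔ m ≤ (closedNbhd G S).ncard :=
  div_le_div_iff_of_pos_right (by exact_mod_cast Fintype.card_pos)

theorem IsDomSet.card_add_ncard_le_ncard_closedNbhd_prism [Finite V] {G : SimpleGraph V}
    {D : Set V} (hD : IsDomSet G D) (π : Equiv.Perm V) :
    Nat.card V + D.ncard ≤ (closedNbhd (prism G π) (.inl '' D)).ncard := by
  have hsub : Set.range .inl ∪ (.inr ∘ π) '' D ⊆ closedNbhd (prism G π) (.inl '' D) := by
    rintro x (⟨v, rfl⟩ | ⟨u, hu, rfl⟩)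
    · rcases hD v with hv | ⟨u, hu, huv⟩
      · exact Or.inl ⟨v, hv, rfl⟩
      · exact Or.inr ⟨.inl u, ⟨u, hu, rfl⟩, huv⟩
    · exact Or.inr ⟨.inl u, ⟨u, hu, rfl⟩, rfl⟩
  have hdisj : Disjoint (Set.range (.inl : V → V ⊕ V)) ((.inr ∘ π) '' D) := by
    rw [Set.disjoint_left]
    rintro _ ⟨v, rfl⟩ ⟨u, -, h⟩
    simp at h
  calc Nat.card V + D.ncard
      = (Set.range (.inl : V → V ⊕ V) ∪ (.inr ∘ π) '' D).ncard := by
        rw [Set.ncard_union_eq hdisj, ← Set.image_univ,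
          Set.ncard_image_of_injective _ Sum.inl_injective, Set.ncard_univ,
          Set.ncard_image_of_injective _ (Sum.inr_injective.comp π.injective)]
    _ ≤ _ := Set.ncard_le_ncard hsub

theorem pDomNum_prism_eq_domNum [Fintype V] [Nonempty V] {G : SimpleGraph V} {Δ : ℕ}
    (hΔ : ∀ v, (G.neighborSet v).ncard ≤ Δ)
    (hγ : (Δ + 1) * domNum G ≤ Fintype.card V + Δ + 1) (π : Equiv.Perm V) :
    pDomNum (prism G π) ((Fintype.card V + domNum G) / (2 * Fintype.card V)) = domNum G := by
  have hp : ((Fintype.card V : ℝ) + domNum G) / (2 * Fintype.card V)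
      = ((Fintype.card V : ℝ) + domNum G) / Fintype.card (V ⊕ V) := by
    rw [Fintype.card_sum, Nat.cast_add, two_mul]
  obtain ⟨D, hD, hDcard⟩ := exists_isDomSet_ncard_eq_domNum G
  have hmem : IsPDomSet (prism G π) ((Fintype.card V + domNum G) / (2 * Fintype.card V))
      (.inl '' D) := by
    rw [hp, isPDomSet_iff_le_ncard, ← hDcard]
    exact_mod_cast Nat.card_eq_fintype_card (α := V) ▸
      hD.card_add_ncard_le_ncard_closedNbhd_prism π
  refine le_antisymm ?_ ?_
  · exact Nat.sInf_le ⟨_, hmem, by rw [Set.ncard_image_of_injective _ Sum.inl_injective, hDcard]⟩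
  · obtain ⟨S, hS, hScard⟩ := Nat.sInf_mem
      (s := {k | ∃ S, IsPDomSet (prism G π) _ S ∧ S.ncard = k}) ⟨_, _, hmem, rfl⟩
    rw [pDomNum, ← hScard]
    rw [hp, isPDomSet_iff_le_ncard] at hS
    replace hS : Fintype.card V + domNum G ≤ (closedNbhd (prism G π) S).ncard := by
      exact_mod_cast hS
    have hN := ncard_closedNbhd_le (ncard_neighborSet_prism_le hΔ π) S
    by_contra! hlt
    nlinarith

theorem cycleGraph_adj_add_one {n : ℕ} (u : Fin (n + 2)) : (cycleGraph (n + 2)).Adj u (u + 1) :=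
  cycleGraph_adj.mpr (.inr (add_sub_cancel_left u 1))

theorem domNum_cycleGraph_le (n : ℕ) : 3 * domNum (cycleGraph (n + 2)) ≤ n + 4 := by
  let f : Fin ((n + 4) / 3) → Fin (n + 2) := fun i => ⟨3 * i, by omega⟩
  have hf : f.Injective := fun i j h => Fin.ext (by simpa [f] using h)
  suffices IsDomSet (cycleGraph (n + 2)) (Set.range f) by
    have := domNum_le this
    rw [Set.ncard_range_of_injective hf, Nat.card_fin] at this
    omega
  intro v
  obtain ⟨q, hq⟩ : ∃ q, v.val / 3 = q := ⟨_, rfl⟩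
  have hv := v.isLt
  rcases (by omega : v.val % 3 = 0 ∨ v.val % 3 = 1 ∨ v.val % 3 = 2) with h0 | h1 | h2
  · exact Or.inl ⟨⟨q, by omega⟩, Fin.ext (show 3 * q = v.val by omega)⟩
  · refine Or.inr ⟨f ⟨q, by omega⟩, ⟨_, rfl⟩, ?_⟩
    convert cycleGraph_adj_add_one (f ⟨q, by omega⟩)
    have hne : f ⟨q, by omega⟩ ≠ Fin.last _ := fun h => by
      have : 3 * q = n + 1 := Fin.ext_iff.mp h
      omega
    ext
    rw [Fin.val_add_one, if_neg hne]
    show v.val = 3 * q + 1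
    omega
  · refine Or.inr ⟨v + 1, ?_, (cycleGraph_adj_add_one v).symm⟩
    by_cases hlast : v = Fin.last _
    · refine ⟨⟨0, by omega⟩, Fin.ext ?_⟩
      rw [Fin.val_add_one, if_pos hlast]
      rfl
    · have : v.val ≠ n + 1 := fun h => hlast (Fin.ext h)
      refine ⟨⟨q + 1, by omega⟩, Fin.ext ?_⟩
      rw [Fin.val_add_one, if_neg hlast]
      show 3 * (q + 1) = v.val + 1
      omega

end SimpleGraph

theorem stmt6 (n : ℕ) (hn : 3 ≤ n) (π : Equiv.Perm (Fin n)) :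
    pDomNum (prism (SimpleGraph.cycleGraph n) π)
        (((n : ℝ) + domNum (SimpleGraph.cycleGraph n)) / (2 * n))
      = domNum (SimpleGraph.cycleGraph n) := by
  obtain ⟨m, rfl⟩ : ∃ m, n = m + 2 := ⟨n - 2, by omega⟩
  have hdeg (v : Fin (m + 2)) : ((cycleGraph (m + 2)).neighborSet v).ncard ≤ 2 := by
    rw [cycleGraph_neighborSet]
    exact (Set.ncard_insert_le _ _).trans (by simp)
  have hγ := domNum_cycleGraph_le m
  simpa using pDomNum_prism_eq_domNum hdeg (by rw [Fintype.card_fin]; omega) π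
end

section
/- Let G be any graph on n vertices, let p ∈ (0, 1], and let π be any permutation of V(G). Then γ_p(G) ≤ γ_p(πG); that is, the p-domination number of G is at most the p-domination number of its prism with respect to π. -/
open SimpleGraph

/-!
Let `S` be `p`-dominating in the prism and let `A`, `B` be the traces of `N[S]` on the two copies
of `V`. Since `(|A| + |B|) / 2n ≥ p`, one of them, say `A`, has `|A| / n ≥ p`. Every vertex of `A`
is in `S`, has a neighbour in `S` inside the first copy, or is matched by `π` to a vertex of `S` in
the second copy; so `A ⊆ N_G[T]` where `T` is `S` folded onto the first copy by `π⁻¹`, and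
`|T| ≤ |S|`. Conversely a `p`-dominating set of `G` placed on both copies is `p`-dominating in the
prism, so neither infimum is the junk value `sInf ∅ = 0` unless the other one is.
-/

section ClosedNbhd

variable {V W : Type*}

lemma closedNbhd_mono (G : SimpleGraph V) {S T : Set V} (h : S ⊆ T) :
    closedNbhd G S ⊆ closedNbhd G T := by
  rintro v (hv | ⟨u, hu, huv⟩)
  · exact Or.inl (h hv)
  · exact Or.inr ⟨u, h hu, huv⟩

lemma image_closedNbhd_subset {G : SimpleGraph V} {H : SimpleGraph W} (f : G →g H)
    (S : Set V) : f '' closedNbhd G S ⊆ closedNbhd H (f '' S) := by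
  rintro _ ⟨v, hv | ⟨u, hu, huv⟩, rfl⟩
  · exact Or.inl ⟨v, hv, rfl⟩
  · exact Or.inr ⟨f u, ⟨u, hu, rfl⟩, f.map_adj huv⟩

end ClosedNbhd

lemma Set.ncard_eq_ncard_preimage_inl_add_ncard_preimage_inr {α β : Type*} [Finite α] [Finite β]
    (s : Set (α ⊕ β)) : s.ncard = (Sum.inl ⁻¹' s).ncard + (Sum.inr ⁻¹' s).ncard := by
  conv_lhs => rw [← Set.image_preimage_inl_union_image_preimage_inr s]
  rw [Set.ncard_union_eq (by simp [Set.disjoint_left]),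
    Set.ncard_image_of_injective _ Sum.inl_injective,
    Set.ncard_image_of_injective _ Sum.inr_injective]

lemma ncard_div_card_le_of_subset {V : Type*} [Fintype V] {s t : Set V} (h : s ⊆ t) :
    (s.ncard : ℝ) / Fintype.card V ≤ t.ncard / Fintype.card V :=
  div_le_div_of_nonneg_right (by exact_mod_cast Set.ncard_le_ncard h) (Nat.cast_nonneg _)

lemma isPDomSet_of_subset_closedNbhd {V : Type*} [Fintype V] {G : SimpleGraph V} {p : ℝ}
    {A T : Set V} (hA : p ≤ A.ncard / (Fintype.card V : ℝ)) (h : A ⊆ closedNbhd G T) :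
    IsPDomSet G p T :=
  hA.trans (ncard_div_card_le_of_subset h)

lemma pDomNum_le_pDomNum {V W : Type*} [Fintype V] [Fintype W] {G : SimpleGraph V}
    {H : SimpleGraph W} {p : ℝ}
    (h : ∀ S, IsPDomSet H p S → ∃ T, IsPDomSet G p T ∧ T.ncard ≤ S.ncard)
    (h' : ∀ T, IsPDomSet G p T → ∃ S, IsPDomSet H p S) :
    pDomNum G p ≤ pDomNum H p := by
  rcases Set.eq_empty_or_nonempty {k | ∃ S, IsPDomSet H p S ∧ S.ncard = k} with hH | hH
  · suffices hG : {k | ∃ T, IsPDomSet G p T ∧ T.ncard = k} = ∅ by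
      rw [pDomNum, hG, Nat.sInf_empty]
      exact Nat.zero_le _
    refine Set.eq_empty_of_forall_notMem ?_
    rintro _ ⟨T, hT, -⟩
    obtain ⟨S, hS⟩ := h' T hT
    exact hH.subset ⟨S, hS, rfl⟩
  · obtain ⟨S, hS, hSk⟩ := Nat.sInf_mem hH
    obtain ⟨T, hT, hTS⟩ := h S hS
    calc pDomNum G p ≤ T.ncard := Nat.sInf_le ⟨T, hT, rfl⟩
      _ ≤ S.ncard := hTS
      _ = pDomNum H p := hSk

namespace prism

variable {V : Type*} {G : SimpleGraph V} {π : Equiv.Perm V} {p : ℝ}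

@[simp] lemma adj_inl_inr {a b : V} : (prism G π).Adj (.inl a) (.inr b) ↔ π a = b := Iff.rfl
@[simp] lemma adj_inr_inl {a b : V} : (prism G π).Adj (.inr a) (.inl b) ↔ π b = a := Iff.rfl

lemma isPDomSet_iff [Fintype V] (S : Set (V ⊕ V)) :
    IsPDomSet (prism G π) p S ↔
      2 * p ≤ (Sum.inl ⁻¹' closedNbhd (prism G π) S).ncard / (Fintype.card V : ℝ) +
        (Sum.inr ⁻¹' closedNbhd (prism G π) S).ncard / (Fintype.card V : ℝ) := by
  rw [IsPDomSet, Set.ncard_eq_ncard_preimage_inl_add_ncard_preimage_inr, Fintype.card_sum,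
    ← add_div, ← mul_le_mul_iff_right₀ (two_pos : (0 : ℝ) < 2)]
  push_cast
  ring_nf

lemma preimage_inl_closedNbhd_subset (S : Set (V ⊕ V)) :
    Sum.inl ⁻¹' closedNbhd (prism G π) S ⊆ closedNbhd G (Sum.elim id π.symm '' S) := by
  rintro v (hv | ⟨u | u, hu, huv⟩)
  · exact Or.inl ⟨_, hv, rfl⟩
  · exact Or.inr ⟨u, ⟨_, hu, rfl⟩, huv⟩
  · exact Or.inl ⟨_, hu, by simp [← adj_inr_inl.mp huv]⟩

lemma preimage_inr_closedNbhd_subset (S : Set (V ⊕ V)) :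
    Sum.inr ⁻¹' closedNbhd (prism G π) S ⊆ closedNbhd G (Sum.elim π id '' S) := by
  rintro v (hv | ⟨u | u, hu, huv⟩)
  · exact Or.inl ⟨_, hv, rfl⟩
  · exact Or.inl ⟨_, hu, adj_inl_inr.mp huv⟩
  · exact Or.inr ⟨u, ⟨_, hu, rfl⟩, huv⟩

lemma exists_isPDomSet_ncard_le [Fintype V] {S : Set (V ⊕ V)} (hS : IsPDomSet (prism G π) p S) :
    ∃ T, IsPDomSet G p T ∧ T.ncard ≤ S.ncard := by
  rw [isPDomSet_iff, two_mul] at hS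
  by_cases hl : p ≤ (Sum.inl ⁻¹' closedNbhd (prism G π) S).ncard / (Fintype.card V : ℝ)
  · exact ⟨_, isPDomSet_of_subset_closedNbhd hl (preimage_inl_closedNbhd_subset S),
      Set.ncard_image_le S.toFinite⟩
  · exact ⟨_, isPDomSet_of_subset_closedNbhd
      (le_of_add_le_add_left (hS.trans (add_le_add_left (not_le.mp hl).le _)))
      (preimage_inr_closedNbhd_subset S),
      Set.ncard_image_le S.toFinite⟩

lemma _root_.IsPDomSet.inl_union_inr [Fintype V] {T : Set V} (hT : IsPDomSet G p T) :
    IsPDomSet (prism G π) p (Sum.inl '' T ∪ Sum.inr '' T) := by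
  have hl : closedNbhd G T ⊆ Sum.inl ⁻¹' closedNbhd (prism G π) (Sum.inl '' T ∪ Sum.inr '' T) :=
    fun v hv ↦ closedNbhd_mono _ Set.subset_union_left
      (image_closedNbhd_subset ⟨Sum.inl, id⟩ T ⟨v, hv, rfl⟩)
  have hr : closedNbhd G T ⊆ Sum.inr ⁻¹' closedNbhd (prism G π) (Sum.inl '' T ∪ Sum.inr '' T) :=
    fun v hv ↦ closedNbhd_mono _ Set.subset_union_right
      (image_closedNbhd_subset ⟨Sum.inr, id⟩ T ⟨v, hv, rfl⟩)
  rw [isPDomSet_iff, two_mul]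
  exact add_le_add (hT.trans (ncard_div_card_le_of_subset hl))
    (hT.trans (ncard_div_card_le_of_subset hr))

end prism

theorem stmt11_general {V : Type*} [Fintype V] (G : SimpleGraph V)
    (p : ℝ)
    (π : Equiv.Perm V) :
    pDomNum G p ≤ pDomNum (prism G π) p :=
  pDomNum_le_pDomNum (fun _ hS ↦ prism.exists_isPDomSet_ncard_le hS)
    (fun _ hT ↦ ⟨_, hT.inl_union_inr⟩)

theorem stmt11 {V : Type*} [Fintype V] (G : SimpleGraph V) (n : ℕ)
    (hn : Fintype.card V = n)
    (p : ℝ) (hp0 : 0 < p) (hp1 : p ≤ 1)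
    (π : Equiv.Perm V) :
    pDomNum G p ≤ pDomNum (prism G π) p :=
  stmt11_general G p π
end

section
/- Let G be a graph on n vertices having an independent set M = {v₁, v₂, …, v_k} of k ≥ 1 vertices, each of maximum degree Δ(G), such that N(v_i) ∩ N(v_j) = ∅ for all distinct v_i, v_j ∈ M. Then for every permutation π of V(G) and every i ∈ {1, 2, …, k}, γ_p(πG) = i for all p ∈ ((i−1)(Δ(G)+2)/(2n), i(Δ(G)+2)/(2n)]. -/
open SimpleGraph

/-!
If every closed neighbourhood has at most `c` vertices, a set of `j` vertices dominates at most
`j c` vertices; conversely `i` vertices whose closed neighbourhoods are pairwise disjoint and of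
size exactly `c` dominate exactly `i c`. Hence if a graph on `N` vertices contains at least `i`
such vertices, its `p`-domination number is `i` for `(i - 1) c / N < p ≤ i c / N`. In the prism
`πG` every closed neighbourhood has at most `Δ + 2` vertices, and the copies in `G₁` of the
vertices of `M` have pairwise disjoint closed neighbourhoods of exactly `Δ + 2` vertices.
-/

section ClosedNbhd

variable {W : Type*} (H : SimpleGraph W)

lemma closedNbhd_empty_s13 : closedNbhd H ∅ = ∅ := by
  simp [closedNbhd]

lemma closedNbhd_singleton (v : W) : closedNbhd H {v} = insert v (H.neighborSet v) := by
  ext x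
  simp [closedNbhd]

lemma closedNbhd_insert (a : W) (S : Set W) :
    closedNbhd H (insert a S) = closedNbhd H {a} ∪ closedNbhd H S := by
  ext x
  simp only [closedNbhd, Set.mem_insert_iff, Set.mem_singleton_iff, Set.mem_ofPred_eq,
    Set.mem_union, exists_eq_or_imp, exists_eq_left]
  tauto

lemma disjoint_closedNbhd_singleton {v w : W} (hne : v ≠ w) (hadj : ¬ H.Adj v w)
    (hdisj : Disjoint (H.neighborSet v) (H.neighborSet w)) :
    Disjoint (closedNbhd H {v}) (closedNbhd H {w}) := by
  rw [closedNbhd_singleton, closedNbhd_singleton, Set.disjoint_insert_left,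
    Set.disjoint_insert_right, Set.mem_insert_iff, not_or]
  exact ⟨⟨hne, fun h => hadj (H.adj_symm h)⟩, hadj, hdisj⟩

variable [Finite W]

lemma ncard_closedNbhd_singleton (v : W) :
    (closedNbhd H {v}).ncard = (H.neighborSet v).ncard + 1 := by
  rw [closedNbhd_singleton, Set.ncard_insert_of_notMem H.notMem_neighborSet_self]

lemma ncard_closedNbhd_le_mul {c : ℕ} (hc : ∀ v, (closedNbhd H {v}).ncard ≤ c) (S : Set W) :
    (closedNbhd H S).ncard ≤ S.ncard * c := by
  induction S, S.toFinite using Set.Finite.induction_on with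
  | empty => simp [closedNbhd_empty_s13]
  | @insert a S ha _ ih =>
    rw [closedNbhd_insert, Set.ncard_insert_of_notMem ha, add_mul, one_mul, add_comm]
    exact (Set.ncard_union_le _ _).trans (add_le_add (hc a) ih)

lemma ncard_closedNbhd_of_pairwiseDisjoint {c : ℕ} (T : Finset W)
    (hT : (T : Set W).PairwiseDisjoint fun v => closedNbhd H {v})
    (hc : ∀ v ∈ T, (closedNbhd H {v}).ncard = c) :
    (closedNbhd H T).ncard = T.card * c := by
  classical
  induction T using Finset.induction_on with
  | empty => simp [closedNbhd_empty_s13]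
  | @insert a T ha ih =>
    have hT' : (T : Set W).PairwiseDisjoint fun v => closedNbhd H {v} :=
      hT.subset (by simp)
    have hdisj : Disjoint (closedNbhd H {a}) (closedNbhd H T) := by
      rw [Set.disjoint_right]
      rintro x (hx | ⟨u, hu, hux⟩) hxa
      · exact Set.disjoint_left.mp (hT (by simp) (by simp [hx]) (by rintro rfl; exact ha hx))
          hxa (Or.inl rfl)
      · exact Set.disjoint_left.mp (hT (by simp) (by simp [hu]) (by rintro rfl; exact ha hu))
          hxa (Or.inr ⟨u, rfl, hux⟩)
    rw [Finset.coe_insert, closedNbhd_insert, Set.ncard_union_eq hdisj, hc a (by simp),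
      ih hT' (fun v hv => hc v (by simp [hv])), Finset.card_insert_of_notMem ha]
    ring

end ClosedNbhd

section PDomination

variable {W : Type*} [Fintype W] (H : SimpleGraph W)

lemma not_isPDomSet_of_ncard_lt {c i : ℕ} {p : ℝ} (hc : ∀ v, (closedNbhd H {v}).ncard ≤ c)
    (hp : ((i : ℝ) - 1) * c / Fintype.card W < p) {S : Set W} (hS : S.ncard < i) :
    ¬ IsPDomSet H p S := by
  have hle : ((closedNbhd H S).ncard : ℝ) ≤ ((i : ℝ) - 1) * c := by
    have hSi : (S.ncard : ℝ) ≤ (i : ℝ) - 1 := by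
      have : (S.ncard : ℝ) + 1 ≤ i := by exact_mod_cast hS
      linarith
    calc ((closedNbhd H S).ncard : ℝ) ≤ S.ncard * c := by
          exact_mod_cast ncard_closedNbhd_le_mul H hc S
      _ ≤ ((i : ℝ) - 1) * c := by gcongr
  unfold IsPDomSet
  have := div_le_div_of_nonneg_right hle (Nat.cast_nonneg (Fintype.card W))
  linarith

theorem pDomNum_eq_of_pairwiseDisjoint_closedNbhd {c i : ℕ} {p : ℝ}
    (hc : ∀ v, (closedNbhd H {v}).ncard ≤ c) (T : Finset W)
    (hT : (T : Set W).PairwiseDisjoint fun v => closedNbhd H {v})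
    (hTc : ∀ v ∈ T, (closedNbhd H {v}).ncard = c) (hiT : i ≤ T.card)
    (hp_lo : ((i : ℝ) - 1) * c / Fintype.card W < p) (hp_hi : p ≤ i * c / Fintype.card W) :
    pDomNum H p = i := by
  obtain ⟨T', hT'T, rfl⟩ := Finset.exists_subset_card_eq hiT
  refine IsLeast.csInf_eq ⟨⟨T', ?_, Set.ncard_coe_finset T'⟩, ?_⟩
  · unfold IsPDomSet
    rw [ncard_closedNbhd_of_pairwiseDisjoint H T' (hT.subset (by simpa using hT'T))
      (fun v hv => hTc v (hT'T hv))]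
    exact_mod_cast hp_hi
  · rintro j ⟨S, hS, rfl⟩
    by_contra hlt
    exact not_isPDomSet_of_ncard_lt H hc hp_lo (not_le.mp hlt) hS

end PDomination

section Prism

variable {V : Type*} (G : SimpleGraph V) (π : Equiv.Perm V)

lemma closedNbhd_prism_inl (v : V) :
    closedNbhd (prism G π) {Sum.inl v} = Sum.inl '' closedNbhd G {v} ∪ {Sum.inr (π v)} := by
  ext (x | x) <;> simp [closedNbhd, prism, eq_comm]

lemma closedNbhd_prism_inr (v : V) :
    closedNbhd (prism G π) {Sum.inr v} =
      Sum.inr '' closedNbhd G {v} ∪ {Sum.inl (π.symm v)} := by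
  ext (x | x) <;> simp [closedNbhd, prism, eq_comm, Equiv.eq_symm_apply]

lemma disjoint_closedNbhd_prism_inl {v w : V} (hne : v ≠ w) (hadj : ¬ G.Adj v w)
    (hdisj : Disjoint (G.neighborSet v) (G.neighborSet w)) :
    Disjoint (closedNbhd (prism G π) {Sum.inl v}) (closedNbhd (prism G π) {Sum.inl w}) := by
  rw [closedNbhd_prism_inl, closedNbhd_prism_inl, Set.disjoint_union_left,
    Set.disjoint_union_right, Set.disjoint_union_right]
  refine ⟨⟨?_, by simp [Set.disjoint_singleton_right]⟩, by simp [Set.disjoint_singleton_left],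
    by simpa using π.injective.ne hne⟩
  exact (Set.disjoint_image_iff Sum.inl_injective).mpr
    (disjoint_closedNbhd_singleton G hne hadj hdisj)

variable [Finite V]

lemma ncard_closedNbhd_prism_inl (v : V) :
    (closedNbhd (prism G π) {Sum.inl v}).ncard = (G.neighborSet v).ncard + 2 := by
  rw [closedNbhd_prism_inl, Set.ncard_union_eq (by simp),
    Set.ncard_image_of_injective _ Sum.inl_injective, ncard_closedNbhd_singleton,
    Set.ncard_singleton]

lemma ncard_closedNbhd_prism_inr (v : V) :
    (closedNbhd (prism G π) {Sum.inr v}).ncard = (G.neighborSet v).ncard + 2 := by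
  rw [closedNbhd_prism_inr, Set.ncard_union_eq (by simp),
    Set.ncard_image_of_injective _ Sum.inr_injective, ncard_closedNbhd_singleton,
    Set.ncard_singleton]

lemma ncard_closedNbhd_prism_le_s13 {Δ : ℕ} (hmax : ∀ w, (G.neighborSet w).ncard ≤ Δ)
    (x : V ⊕ V) : (closedNbhd (prism G π) {x}).ncard ≤ Δ + 2 := by
  rcases x with v | v
  · simpa [ncard_closedNbhd_prism_inl] using hmax v
  · simpa [ncard_closedNbhd_prism_inr] using hmax v

end Prism

theorem stmt13_general {V : Type*} [Fintype V] (G : SimpleGraph V) (n k Δ : ℕ)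
    (hn : Fintype.card V = n)
    (M : Finset V) (hMcard : M.card = k)
    (hmax : ∀ w : V, (G.neighborSet w).ncard ≤ Δ)
    (hdeg : ∀ v ∈ M, (G.neighborSet v).ncard = Δ)
    (hindep : ∀ v ∈ M, ∀ w ∈ M, ¬ G.Adj v w)
    (hdisj : ∀ v ∈ M, ∀ w ∈ M, v ≠ w → G.neighborSet v ∩ G.neighborSet w = ∅) :
    ∀ π : Equiv.Perm V, ∀ i : ℕ, 1 ≤ i → i ≤ k →
      ∀ p : ℝ, ((i : ℝ) - 1) * ((Δ : ℝ) + 2) / (2 * n) < p →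
        p ≤ (i : ℝ) * ((Δ : ℝ) + 2) / (2 * n) →
        pDomNum (prism G π) p = i := by
  intro π i _ hik p hp_lo hp_hi
  have hcard : (Fintype.card (V ⊕ V) : ℝ) = 2 * n := by
    rw [Fintype.card_sum, hn]; push_cast; ring
  have hpacking : ((M.map .inl : Finset (V ⊕ V)) : Set (V ⊕ V)).PairwiseDisjoint
      fun x => closedNbhd (prism G π) {x} := by
    simp only [Finset.coe_map, Function.Embedding.inl_apply]
    rintro _ ⟨v, hv, rfl⟩ _ ⟨w, hw, rfl⟩ hne
    have hvw : v ≠ w := fun h => hne (congrArg _ h)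
    exact disjoint_closedNbhd_prism_inl G π hvw (hindep v hv w hw)
      (Set.disjoint_iff_inter_eq_empty.mpr (hdisj v hv w hw hvw))
  refine pDomNum_eq_of_pairwiseDisjoint_closedNbhd (prism G π) (c := Δ + 2)
    (ncard_closedNbhd_prism_le_s13 G π hmax) _ hpacking ?_ (by simpa [hMcard] using hik) ?_ ?_
  · simp only [Finset.mem_map, Function.Embedding.inl_apply]
    rintro _ ⟨v, hv, rfl⟩
    rw [ncard_closedNbhd_prism_inl, hdeg v hv]
  · rw [hcard]; push_cast; exact hp_lo
  · rw [hcard]; push_cast; exact hp_hi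

theorem stmt13 {V : Type*} [Fintype V] (G : SimpleGraph V) (n k Δ : ℕ)
    (hn : Fintype.card V = n)
    (M : Finset V) (hMcard : M.card = k) (hk : 1 ≤ k)
    (hmax : ∀ w : V, (G.neighborSet w).ncard ≤ Δ)
    (hdeg : ∀ v ∈ M, (G.neighborSet v).ncard = Δ)
    (hindep : ∀ v ∈ M, ∀ w ∈ M, ¬ G.Adj v w)
    (hdisj : ∀ v ∈ M, ∀ w ∈ M, v ≠ w → G.neighborSet v ∩ G.neighborSet w = ∅) :
    ∀ π : Equiv.Perm V, ∀ i : ℕ, 1 ≤ i → i ≤ k →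
      ∀ p : ℝ, ((i : ℝ) - 1) * ((Δ : ℝ) + 2) / (2 * n) < p →
        p ≤ (i : ℝ) * ((Δ : ℝ) + 2) / (2 * n) →
        pDomNum (prism G π) p = i :=
  stmt13_general G n k Δ hn M hMcard hmax hdeg hindep hdisj
end
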